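/- arXiv:1707.04516 — 2 statements merged into one kernel-verified Lean document; each statement's English description precedes it below -/
import Mathlib

section
/- Let G be a locally compact, Hausdorff, second-countable ample étale groupoid with compact unit space G⁰. The following are equivalent: (i) G is minimal; (ii) for every nonempty compact open U ⊆ G⁰ there exist compact open bisections E₁, …, Eₙ with ⋃ⱼ U_{E_j} = G⁰; (iii) for every nonzero f ∈ C(G⁰, ℤ)⁺ there exist compact open bisections E₁, …, Eₙ with Σⱼ E_j f ≥ 1_{G⁰}. -/
open Set

/-- A (locally compact, Hausdorff, second-countable) étale groupoid structure on a
topological space `G`.  Multiplication is formalized as a total function whose groupoid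
axioms are only imposed on composable pairs (those `(α, β)` with `s α = r β`). -/
structure EtaleGroupoid (G : Type*) [TopologicalSpace G] where
  unitSpace : Set G
  r : G → G
  s : G → G
  mul : G → G → G
  inv : G → G
  r_mem : ∀ α, r α ∈ unitSpace
  s_mem : ∀ α, s α ∈ unitSpace
  r_unit : ∀ u ∈ unitSpace, r u = u
  s_unit : ∀ u ∈ unitSpace, s u = u
  r_mul : ∀ α β, s α = r β → r (mul α β) = r α
  s_mul : ∀ α β, s α = r β → s (mul α β) = s β
  mul_assoc' : ∀ α β γ, s α = r β → s β = r γ → mul (mul α β) γ = mul α (mul β γ)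
  unit_mul : ∀ α, mul (r α) α = α
  mul_unit : ∀ α, mul α (s α) = α
  r_inv : ∀ α, r (inv α) = s α
  s_inv : ∀ α, s (inv α) = r α
  mul_inv : ∀ α, mul α (inv α) = r α
  inv_mul : ∀ α, mul (inv α) α = s α
  /-- multiplication is continuous on the set of composable pairs -/
  continuousOn_mul : ContinuousOn (fun p : G × G => mul p.1 p.2) {p : G × G | s p.1 = r p.2}
  continuous_inv : Continuous inv
  /-- étale: the range map is a local homeomorphism onto the unit space -/
  isLocalHomeomorph_r : IsLocalHomeomorph fun α => (⟨r α, r_mem α⟩ : unitSpace)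
  /-- étale: the source map is a local homeomorphism onto the unit space -/
  isLocalHomeomorph_s : IsLocalHomeomorph fun α => (⟨s α, s_mem α⟩ : unitSpace)

namespace EtaleGroupoid

variable {G : Type*} [TopologicalSpace G] (𝒢 : EtaleGroupoid G)

/-- A bisection: a set on which both `r` and `s` are injective. -/
def IsBisection (E : Set G) : Prop := Set.InjOn 𝒢.r E ∧ Set.InjOn 𝒢.s E

def IsOpenBisection (E : Set G) : Prop := IsOpen E ∧ 𝒢.IsBisection E

def IsCompactOpenBisection (E : Set G) : Prop := IsCompact E ∧ IsOpen E ∧ 𝒢.IsBisection E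

/-- `U` is an open subset of the unit space `G⁰` (in the subspace topology). -/
def IsUnitOpen (U : Set G) : Prop :=
  U ⊆ 𝒢.unitSpace ∧ ∃ V : Set G, IsOpen V ∧ U = V ∩ 𝒢.unitSpace

/-- `U_E = r(EU) = {r α : α ∈ E, s α ∈ U}`. -/
def ranOn (E U : Set G) : Set G := 𝒢.r '' {α ∈ E | 𝒢.s α ∈ U}

/-- `G` is minimal if every orbit `r(Gu)` is dense in the unit space. -/
def Minimal : Prop :=
  ∀ u ∈ 𝒢.unitSpace, 𝒢.unitSpace ⊆ closure (𝒢.r '' {α | 𝒢.s α = u})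

/-- `G` is ample if its topology has a basis of compact open bisections. -/
def Ample : Prop := ∀ (α : G) (V : Set G), IsOpen V → α ∈ V →
  ∃ E : Set G, 𝒢.IsCompactOpenBisection E ∧ α ∈ E ∧ E ⊆ V

end EtaleGroupoid
namespace EtaleGroupoid

variable {G : Type*} [TopologicalSpace G] (𝒢 : EtaleGroupoid G)

open Classical in
/-- For a bisection `E` and `f : G⁰ → ℤ`, the function `Ef`, with
`Ef(u) = f(s α)` if there is `α ∈ E` with `r α = u`, and `Ef(u) = 0` otherwise. -/
noncomputable def act (E : Set G) (f : G → ℤ) : G → ℤ := fun u =>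
  if h : ∃ α ∈ E, 𝒢.r α = u then f (𝒢.s h.choose) else 0

end EtaleGroupoid

/-! A nonempty open `U ⊆ G⁰` in a minimal groupoid meets every orbit, so each unit `u` is
`r α` for an arrow `α` with `s α ∈ U`; enlarging `α` to a compact open bisection `E` makes
`U_E` an open neighbourhood of `u`, and compactness of `G⁰` leaves finitely many. For `f`,
apply this to `U = {f ≥ 1}`: then `E f ≥ 1` on `U_E`. Conversely, testing (ii) or (iii) on
compact open `U` (or on its indicator) shows that `U` meets every orbit, and in an ample
groupoid such `U` form a neighbourhood basis of `G⁰`, which is minimality. -/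

theorem IsCompact.exists_fin_subcover_of_relOpen {X ι : Type*} [TopologicalSpace X]
    {K : Set X} (hK : IsCompact K) (W : ι → Set X)
    (hW : ∀ i, ∃ V, IsOpen V ∧ W i = V ∩ K) (hcover : K ⊆ ⋃ i, W i) :
    ∃ (n : ℕ) (e : Fin n → ι), K ⊆ ⋃ j, W (e j) := by
  choose V hVopen hWV using hW
  obtain ⟨t, ht⟩ := hK.elim_finite_subcover V hVopen
    (hcover.trans <| iUnion_mono fun i => (hWV i).trans_subset inter_subset_left)
  refine ⟨t.card, fun j => t.equivFin.symm j, fun x hx => ?_⟩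
  obtain ⟨i, hit, hxi⟩ := mem_iUnion₂.mp (ht hx)
  exact mem_iUnion.mpr ⟨t.equivFin ⟨i, hit⟩, by simpa [hWV i] using ⟨hxi, hx⟩⟩

namespace EtaleGroupoid

variable {G : Type*} [TopologicalSpace G] (𝒢 : EtaleGroupoid G)

/-- `U ⊆ G⁰` is *full* if `r(GU) = G⁰`, i.e. `U` meets every orbit. -/
def IsFull (U : Set G) : Prop := 𝒢.unitSpace ⊆ 𝒢.r '' (𝒢.s ⁻¹' U)

variable {𝒢}

theorem IsFull.mono {U U' : Set G} (hU : 𝒢.IsFull U) (h : U ⊆ U') : 𝒢.IsFull U' :=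
  hU.trans <| image_mono <| preimage_mono h

theorem continuous_r : Continuous 𝒢.r :=
  continuous_subtype_val.comp 𝒢.isLocalHomeomorph_r.continuous

theorem continuous_s : Continuous 𝒢.s :=
  continuous_subtype_val.comp 𝒢.isLocalHomeomorph_s.continuous

theorem isClosed_unitSpace [T2Space G] : IsClosed 𝒢.unitSpace := by
  have h : 𝒢.unitSpace = {α | 𝒢.r α = α} :=
    Subset.antisymm 𝒢.r_unit fun α (hα : 𝒢.r α = α) => hα ▸ 𝒢.r_mem α
  exact h ▸ isClosed_eq continuous_r continuous_id

theorem isUnitOpen_image_r {O : Set G} (hO : IsOpen O) : 𝒢.IsUnitOpen (𝒢.r '' O) := by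
  obtain ⟨V, hV, hVO⟩ := isOpen_induced_iff.mp (𝒢.isLocalHomeomorph_r.isOpenMap O hO)
  refine ⟨image_subset_iff.mpr fun α _ => 𝒢.r_mem α, V, hV, ?_⟩
  rw [inter_comm, ← Subtype.image_preimage_coe, hVO, image_image]

theorem isUnitOpen_ranOn {E U : Set G} (hE : IsOpen E) (hU : 𝒢.IsUnitOpen U) :
    𝒢.IsUnitOpen (𝒢.ranOn E U) := by
  obtain ⟨-, V, hV, rfl⟩ := hU
  have h : {α ∈ E | 𝒢.s α ∈ V ∩ 𝒢.unitSpace} = E ∩ 𝒢.s ⁻¹' V := by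
    ext α
    exact ⟨fun h => ⟨h.1, h.2.1⟩, fun h => ⟨h.1, h.2, 𝒢.s_mem α⟩⟩
  rw [ranOn, h]
  exact isUnitOpen_image_r (hE.inter (hV.preimage continuous_s))

theorem isUnitOpen_preimage_inter {f : G → ℤ} (hf : ContinuousOn f 𝒢.unitSpace) (T : Set ℤ) :
    𝒢.IsUnitOpen (f ⁻¹' T ∩ 𝒢.unitSpace) :=
  ⟨inter_subset_right, continuousOn_iff'.mp hf T (isOpen_discrete T)⟩

theorem continuousOn_indicator_one [T2Space G] {U : Set G} (hU : 𝒢.IsUnitOpen U)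
    (hUc : IsCompact U) : ContinuousOn (U.indicator 1 : G → ℤ) 𝒢.unitSpace := by
  obtain ⟨-, V, hV, hUV⟩ := hU
  have hclopen : IsClopen (Subtype.val ⁻¹' U : Set 𝒢.unitSpace) := by
    refine ⟨hUc.isClosed.preimage continuous_subtype_val, ?_⟩
    rw [hUV, preimage_inter, Subtype.coe_preimage_self, inter_univ]
    exact hV.preimage continuous_subtype_val
  rw [continuousOn_iff_continuous_domRestrict]
  convert hclopen.continuous_indicator (continuous_const (y := (1 : ℤ))) using 1
  ext x
  exact (indicator_comp_right Subtype.val).symm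

theorem ranOn_subset_unitSpace (E U : Set G) : 𝒢.ranOn E U ⊆ 𝒢.unitSpace :=
  image_subset_iff.mpr fun α _ => 𝒢.r_mem α

theorem act_r_of_mem {E : Set G} (hE : 𝒢.IsBisection E) (f : G → ℤ) {α : G} (hα : α ∈ E) :
    𝒢.act E f (𝒢.r α) = f (𝒢.s α) := by
  have hex : ∃ β ∈ E, 𝒢.r β = 𝒢.r α := ⟨α, hα, rfl⟩
  rw [act, dif_pos hex, hE.1 hex.choose_spec.1 hα hex.choose_spec.2]

theorem act_nonneg {f : G → ℤ} (hf : ∀ x, 0 ≤ f x) (E : Set G) (u : G) :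
    0 ≤ 𝒢.act E f u := by
  unfold act
  split
  · exact hf _
  · exact le_rfl

theorem exists_mem_support_of_act_ne_zero {E : Set G} {f : G → ℤ} {u : G}
    (h : 𝒢.act E f u ≠ 0) : ∃ α ∈ E, 𝒢.r α = u ∧ f (𝒢.s α) ≠ 0 := by
  unfold act at h
  split at h
  · next hex => exact ⟨_, hex.choose_spec.1, hex.choose_spec.2, h⟩
  · exact absurd rfl h

theorem Minimal.isFull (hmin : 𝒢.Minimal) {U : Set G} (hU : 𝒢.IsUnitOpen U)
    (hne : U.Nonempty) : 𝒢.IsFull U := by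
  obtain ⟨hU0, V, hV, rfl⟩ := hU
  obtain ⟨w, hwV, hw⟩ := hne
  intro u hu
  obtain ⟨_, hxV, β, hβ, rfl⟩ := mem_closure_iff.mp (hmin u hu hw) V hV hwV
  refine ⟨𝒢.inv β, ?_, by rw [𝒢.r_inv]; exact hβ⟩
  rw [mem_preimage, 𝒢.s_inv]
  exact ⟨hxV, 𝒢.r_mem β⟩

theorem minimal_of_isFull [T2Space G] (hample : 𝒢.Ample)
    (hfull : ∀ U, 𝒢.IsUnitOpen U → IsCompact U → U.Nonempty → 𝒢.IsFull U) :
    𝒢.Minimal := by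
  intro u hu w hw
  refine mem_closure_iff.mpr fun W hW hwW => ?_
  obtain ⟨E, hE, hwE, hEW⟩ := hample w W hW hwW
  obtain ⟨α, hαE, rfl⟩ := hfull (E ∩ 𝒢.unitSpace) ⟨inter_subset_right, E, hE.2.1, rfl⟩
    (hE.1.inter_right isClosed_unitSpace) ⟨w, hwE, hw⟩ hu
  exact ⟨𝒢.r (𝒢.inv α), by rw [𝒢.r_inv]; exact hEW hαE.1,
    𝒢.inv α, 𝒢.s_inv α, rfl⟩

theorem IsFull.exists_iUnion_ranOn_eq (hample : 𝒢.Ample) (hcompact : IsCompact 𝒢.unitSpace)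
    {U : Set G} (hU : 𝒢.IsUnitOpen U) (hfull : 𝒢.IsFull U) :
    ∃ (n : ℕ) (E : Fin n → Set G), (∀ j, 𝒢.IsCompactOpenBisection (E j)) ∧
      (⋃ j, 𝒢.ranOn (E j) U) = 𝒢.unitSpace := by
  let W : {E // 𝒢.IsCompactOpenBisection E} → Set G := fun E => 𝒢.ranOn E U
  have hcover : 𝒢.unitSpace ⊆ ⋃ E, W E := by
    intro u hu
    obtain ⟨α, hαU, rfl⟩ := hfull hu
    obtain ⟨E, hE, hαE, -⟩ := hample α univ isOpen_univ trivial
    exact mem_iUnion.mpr ⟨⟨E, hE⟩, α, ⟨hαE, hαU⟩, rfl⟩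
  obtain ⟨n, e, he⟩ := hcompact.exists_fin_subcover_of_relOpen W
    (fun E => (isUnitOpen_ranOn E.2.2.1 hU).2) hcover
  exact ⟨n, fun j => e j, fun j => (e j).2,
    Subset.antisymm (iUnion_subset fun j => ranOn_subset_unitSpace _ _) he⟩

theorem isFull_of_subset_iUnion_ranOn {ι : Type*} {E : ι → Set G} {U : Set G}
    (hcover : 𝒢.unitSpace ⊆ ⋃ j, 𝒢.ranOn (E j) U) : 𝒢.IsFull U := by
  intro u hu
  obtain ⟨j, α, ⟨-, hαU⟩, rfl⟩ := mem_iUnion.mp (hcover hu)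
  exact ⟨α, hαU, rfl⟩

theorem one_le_sum_act_of_subset_iUnion_ranOn {n : ℕ} {E : Fin n → Set G}
    (hE : ∀ j, 𝒢.IsBisection (E j)) {f : G → ℤ} (hf : ∀ x, 0 ≤ f x) {U : Set G}
    (hfU : ∀ x ∈ U, 1 ≤ f x) (hcover : 𝒢.unitSpace ⊆ ⋃ j, 𝒢.ranOn (E j) U) :
    ∀ u ∈ 𝒢.unitSpace, 1 ≤ ∑ j, 𝒢.act (E j) f u := by
  intro u hu
  obtain ⟨j, α, ⟨hαE, hαU⟩, rfl⟩ := mem_iUnion.mp (hcover hu)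
  calc 1 ≤ f (𝒢.s α) := hfU _ hαU
    _ = 𝒢.act (E j) f (𝒢.r α) := (act_r_of_mem (hE j) f hαE).symm
    _ ≤ ∑ i, 𝒢.act (E i) f (𝒢.r α) :=
      Finset.single_le_sum (fun i _ => act_nonneg hf _ _) (Finset.mem_univ j)

theorem isFull_support_of_one_le_sum_act {n : ℕ} {E : Fin n → Set G} {f : G → ℤ}
    (h : ∀ u ∈ 𝒢.unitSpace, 1 ≤ ∑ j, 𝒢.act (E j) f u) : 𝒢.IsFull (Function.support f) := by
  intro u hu
  obtain ⟨j, -, hj⟩ := Finset.exists_ne_zero_of_sum_ne_zero (zero_lt_one.trans_le (h u hu)).ne'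
  obtain ⟨α, -, rfl, hα⟩ := exists_mem_support_of_act_ne_zero hj
  exact ⟨α, hα, rfl⟩

end EtaleGroupoid

theorem minimal_tfae_ample_general {G : Type*} [TopologicalSpace G]
    [T2Space G]
    (𝒢 : EtaleGroupoid G) (hample : 𝒢.Ample) (hcompact : IsCompact 𝒢.unitSpace) :
    (𝒢.Minimal ↔
      ∀ U : Set G, 𝒢.IsUnitOpen U → IsCompact U → U.Nonempty →
        ∃ (n : ℕ) (E : Fin n → Set G), (∀ j, 𝒢.IsCompactOpenBisection (E j)) ∧
          (⋃ j, 𝒢.ranOn (E j) U) = 𝒢.unitSpace) ∧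
    (𝒢.Minimal ↔
      ∀ f : G → ℤ, ContinuousOn f 𝒢.unitSpace → (∀ x ∉ 𝒢.unitSpace, f x = 0) →
        (∀ x, 0 ≤ f x) → (∃ u ∈ 𝒢.unitSpace, f u ≠ 0) →
          ∃ (n : ℕ) (E : Fin n → Set G), (∀ j, 𝒢.IsCompactOpenBisection (E j)) ∧
            ∀ u ∈ 𝒢.unitSpace, 1 ≤ ∑ j, 𝒢.act (E j) f u) := by
  refine ⟨⟨fun hmin U hU _ hne => (hmin.isFull hU hne).exists_iUnion_ranOn_eq hample hcompact hU,
    fun h => EtaleGroupoid.minimal_of_isFull hample fun U hU hUc hne => ?_⟩,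
    ⟨fun hmin f hf _ hpos hne => ?_, fun h => EtaleGroupoid.minimal_of_isFull hample
      fun U hU hUc hne => ?_⟩⟩
  · obtain ⟨n, E, -, hcover⟩ := h U hU hUc hne
    exact EtaleGroupoid.isFull_of_subset_iUnion_ranOn hcover.ge
  · obtain ⟨u, hu, hfu⟩ := hne
    have hU := 𝒢.isUnitOpen_preimage_inter hf (Ici 1)
    have hUne : (f ⁻¹' Ici 1 ∩ 𝒢.unitSpace).Nonempty :=
      ⟨u, show 1 ≤ f u by have := hpos u; omega, hu⟩
    obtain ⟨n, E, hE, hcover⟩ :=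
      (hmin.isFull hU hUne).exists_iUnion_ranOn_eq hample hcompact hU
    exact ⟨n, E, hE, EtaleGroupoid.one_le_sum_act_of_subset_iUnion_ranOn
      (fun j => (hE j).2.2) hpos (fun x hx => hx.1) hcover.ge⟩
  · obtain ⟨w, hw⟩ := hne
    obtain ⟨n, E, -, hsum⟩ := h (U.indicator 1) (EtaleGroupoid.continuousOn_indicator_one hU hUc)
      (fun x hx => indicator_of_notMem (fun hxU => hx (hU.1 hxU)) _)
      (indicator_nonneg fun _ _ => zero_le_one) ⟨w, hU.1 hw, by simp [hw]⟩
    exact (EtaleGroupoid.isFull_support_of_one_le_sum_act hsum).mono support_indicator_subset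

/-- For an ample étale groupoid with compact unit space, the following
are equivalent: (i) minimality; (ii) every nonempty compact open `U ⊆ G⁰` admits compact
open bisections `E₁, …, Eₙ` with `⋃ⱼ U_{Eⱼ} = G⁰`; (iii) for every nonzero
`f ∈ C(G⁰, ℤ)⁺` there are compact open bisections `E₁, …, Eₙ` with `Σⱼ Eⱼf ≥ 1_{G⁰}`. -/
theorem minimal_tfae_ample {G : Type*} [TopologicalSpace G]
    [LocallyCompactSpace G] [T2Space G] [SecondCountableTopology G]
    (𝒢 : EtaleGroupoid G) (hample : 𝒢.Ample) (hcompact : IsCompact 𝒢.unitSpace) :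
    (𝒢.Minimal ↔
      ∀ U : Set G, 𝒢.IsUnitOpen U → IsCompact U → U.Nonempty →
        ∃ (n : ℕ) (E : Fin n → Set G), (∀ j, 𝒢.IsCompactOpenBisection (E j)) ∧
          (⋃ j, 𝒢.ranOn (E j) U) = 𝒢.unitSpace) ∧
    (𝒢.Minimal ↔
      ∀ f : G → ℤ, ContinuousOn f 𝒢.unitSpace → (∀ x ∉ 𝒢.unitSpace, f x = 0) →
        (∀ x, 0 ≤ f x) → (∃ u ∈ 𝒢.unitSpace, f u ≠ 0) →
          ∃ (n : ℕ) (E : Fin n → Set G), (∀ j, 𝒢.IsCompactOpenBisection (E j)) ∧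
            ∀ u ∈ 𝒢.unitSpace, 1 ≤ ∑ j, 𝒢.act (E j) f u) :=
  minimal_tfae_ample_general 𝒢 hample hcompact
end

section
/- Let E = (E⁰, E¹, r, s) be a topological graph with E⁰ totally disconnected and with r proper and surjective. If f ≈ g in C_c(E⁰, ℤ)⁺, then there exist finitely many compact open sets U₁, …, Uₙ ⊆ E⁰ and natural numbers p, q and q₁, …, qₙ such that Θᵖ(f) = Σᵢ Θ^{qᵢ}(1_{Uᵢ}) and Θ^q(g) = Σᵢ 1_{Uᵢ}. -/
open Set

/-- A topological graph `E = (E⁰, E¹, r, s)`: a continuous range map and a source map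
that is a local homeomorphism, between locally compact Hausdorff spaces. -/
structure TopGraph (V E : Type*) [TopologicalSpace V] [TopologicalSpace E] where
  r : E → V
  s : E → V
  continuous_r : Continuous r
  isLocalHomeomorph_s : IsLocalHomeomorph s

/-- `C_c(E⁰, ℤ)⁺`: compactly supported continuous functions `E⁰ → ℤ` with nonnegative
values. -/
def CcPosV (V : Type*) [TopologicalSpace V] : Set (V → ℤ) :=
  {f | Continuous f ∧ HasCompactSupport f ∧ ∀ v, 0 ≤ f v}

namespace TopGraph

variable {V E : Type*} [TopologicalSpace V] [TopologicalSpace E] (gr : TopGraph V E)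

/-- `Θ¹(f)(v) = Σ_{e ∈ E¹, s(e) = v} f(r(e))` (a finite sum when `r` is proper and `f`
is compactly supported). -/
noncomputable def theta1 (f : V → ℤ) : V → ℤ :=
  fun v => ∑ᶠ e ∈ {e : E | gr.s e = v}, f (gr.r e)

/-- `Θⁿ = (Θ¹)ⁿ`, so that `Θⁿ(f)(v) = Σ_{λ ∈ Eⁿ, s(λ) = v} f(r(λ))`. -/
noncomputable def theta (n : ℕ) (f : V → ℤ) : V → ℤ := (theta1 gr)^[n] f


/-- `f ∼ g` iff `Θᵖ(f) = Θ^q(g)` for some `p, q ∈ ℕ`. -/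
def Sim (f g : V → ℤ) : Prop := ∃ p q : ℕ, gr.theta p f = gr.theta q g

/-- `f ≈ g` iff there are finitely many pairs `(fᵢ, gᵢ)` in `C_c(E⁰,ℤ)⁺ × C_c(E⁰,ℤ)⁺`
with `f ∼ Σᵢ fᵢ`, `g ∼ Σᵢ gᵢ`, and `fᵢ ∼ gᵢ` for all `i`. -/
def Approx (f g : V → ℤ) : Prop :=
  ∃ L : List ((V → ℤ) × (V → ℤ)),
    (∀ p ∈ L, p.1 ∈ CcPosV V ∧ p.2 ∈ CcPosV V) ∧
    gr.Sim f (L.map Prod.fst).sum ∧ gr.Sim g (L.map Prod.snd).sum ∧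
    ∀ p ∈ L, gr.Sim p.1 p.2

end TopGraph

/-! Write `Θᵃ f = Θᵇ (Σᵢ fᵢ)`, `Θᶜ g = Θᵈ (Σᵢ gᵢ)` and `Θ^{Pᵢ} fᵢ = Θ^{Qᵢ} gᵢ`. Applying `Θ^{N+d}`
with `N ≥ Pᵢ` for all `i` and using additivity of `Θ` gives
`Θ^{N+d+a} f = Σᵢ Θ^{N-Pᵢ+Qᵢ+b} hᵢ` and `Θᶜ g = Σᵢ hᵢ` with `hᵢ = Θᵈ gᵢ`. Since `s` is a local
homeomorphism, fibre sums of a compactly supported locally constant function are locally constant,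
so `Θ` preserves `C_c(E⁰, ℤ)⁺`; every `hᵢ` is then the finite sum of the indicators of the compact
open sets `{hᵢ > k}`. -/

theorem IsLocallyInjective.finite_preimage_singleton_inter {X Y : Type*} [TopologicalSpace X]
    [TopologicalSpace Y] [T1Space Y] {s : X → Y} (hs : IsLocallyInjective s)
    (hsc : Continuous s) {K : Set X} (hK : IsCompact K) (y : Y) :
    (s ⁻¹' {y} ∩ K).Finite := by
  refine (hK.inter_left (isClosed_singleton.preimage hsc)).finite <|
    isDiscrete_iff_forall_mem_exists_isOpen.2 fun x hx => ?_
  obtain ⟨W, hWo, hxW, hWinj⟩ := hs x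
  refine ⟨W, hWo, subset_antisymm (fun x' hx' => hWinj hx'.1 hxW ?_) (by simpa using ⟨hxW, hx⟩)⟩
  rw [hx'.2.1, hx.1]

theorem IsLocallyInjective.exists_pairwiseDisjoint_injOn {X Y M : Type*} [TopologicalSpace X]
    [T2Space X] {s : X → Y} (hs : IsLocallyInjective s) {g : X → M} (hg : IsLocallyConstant g)
    {F : Set X} (hF : F.Finite) :
    ∃ W : X → Set X, (∀ x, x ∈ W x ∧ IsOpen (W x) ∧ (W x).InjOn s ∧ ∀ x' ∈ W x, g x' = g x) ∧
      F.PairwiseDisjoint W := by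
  obtain ⟨D, hD, hDdisj⟩ := hF.t2_separation
  choose U hUo hxU hUinj using hs
  refine ⟨fun x => D x ∩ U x ∩ {x' | g x' = g x}, fun x => ⟨⟨⟨(hD x).1, hxU x⟩, rfl⟩,
    ((hD x).2.inter (hUo x)).inter (hg.isOpen_fiber _), (hUinj x).mono fun _ h => h.1.2,
    fun _ h => h.2⟩, hDdisj.mono fun x => ?_⟩
  exact inter_subset_left.trans inter_subset_left

open Topology in
theorem IsLocalHomeomorph.isLocallyConstant_finsum_preimage_singleton {X Y M : Type*}
    [TopologicalSpace X] [TopologicalSpace Y] [T2Space X] [T2Space Y] [AddCommMonoid M]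
    {s : X → Y} (hs : IsLocalHomeomorph s) {g : X → M} (hg : IsLocallyConstant g)
    (hgc : HasCompactSupport g) : IsLocallyConstant fun y => ∑ᶠ x ∈ s ⁻¹' {y}, g x := by
  refine (IsLocallyConstant.iff_eventually_eq _).2 fun y => ?_
  set K := tsupport g
  set F := s ⁻¹' {y} ∩ K
  have hF : F.Finite :=
    hs.isLocallyInjective.finite_preimage_singleton_inter hs.continuous hgc y
  obtain ⟨W, hW, hWdisj⟩ := hs.isLocallyInjective.exists_pairwiseDisjoint_injOn hg hF
  choose hxW hWo hWinj hWg using hW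
  set N := (⋂ x ∈ F, s '' W x) \ s '' (K \ ⋃ x ∈ F, W x)
  have hN : N ∈ 𝓝 y := by
    refine IsOpen.mem_nhds ((hF.isOpen_biInter fun x _ => hs.isOpenMap _ (hWo x)).sdiff
      ((hgc.diff (isOpen_biUnion fun x _ => hWo x)).image hs.continuous).isClosed) ⟨?_, ?_⟩
    · exact mem_iInter₂.2 fun x hx => ⟨x, hxW x, hx.1⟩
    · rintro ⟨x, ⟨hxK, hxW'⟩, rfl⟩
      exact hxW' (mem_biUnion ⟨rfl, hxK⟩ (hxW x))
  -- Over `y' ∈ N`, the fibre meets each `W x` in exactly one point and misses the rest of `K`.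
  suffices key : ∀ y' ∈ N, ∑ᶠ x ∈ s ⁻¹' {y'}, g x = ∑ᶠ x ∈ F, g x by
    filter_upwards [hN] with y' hy' using (key y' hy').trans (key y (mem_of_mem_nhds hN)).symm
  intro y' hy'
  have hsingle : ∀ x ∈ F, ∃ x', g x' = g x ∧ s ⁻¹' {y'} ∩ W x = {x'} := by
    intro x hx
    obtain ⟨x', hx'W, rfl⟩ := mem_iInter₂.1 hy'.1 x hx
    exact ⟨x', hWg x x' hx'W, subset_antisymm (fun z hz => hWinj x hz.2 hx'W hz.1)
      (singleton_subset_iff.2 ⟨rfl, hx'W⟩)⟩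
  choose! pt hpt_g hpt using hsingle
  calc ∑ᶠ x ∈ s ⁻¹' {y'}, g x = ∑ᶠ x ∈ ⋃ x ∈ F, s ⁻¹' {y'} ∩ W x, g x := by
        refine finsum_mem_inter_support_eq' g _ _ fun z hz => ⟨fun hzy => ?_, ?_⟩
        · by_contra hzW
          refine hy'.2 ⟨z, ⟨subset_closure hz, fun hz' => hzW ?_⟩, hzy⟩
          obtain ⟨x, hx, hzx⟩ := mem_iUnion₂.1 hz'
          exact mem_biUnion hx ⟨hzy, hzx⟩
        · intro hz'
          obtain ⟨x, _, hzx⟩ := mem_iUnion₂.1 hz'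
          exact hzx.1
    _ = ∑ᶠ x ∈ F, ∑ᶠ z ∈ s ⁻¹' {y'} ∩ W x, g z :=
        finsum_mem_biUnion (hWdisj.mono fun _ => inter_subset_right) hF
          fun x hx => hpt x hx ▸ finite_singleton _
    _ = ∑ᶠ x ∈ F, g x :=
        finsum_mem_congr rfl fun x hx => by rw [hpt x hx, finsum_mem_singleton, hpt_g x hx]

theorem HasCompactSupport.comp_isProperMap {X Y M : Type*} [TopologicalSpace X]
    [TopologicalSpace Y] [Zero M] {f : Y → M} (hf : HasCompactSupport f) {φ : X → Y}
    (hφ : IsProperMap φ) : HasCompactSupport (f ∘ φ) :=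
  (hφ.isCompact_preimage hf).of_isClosed_subset (isClosed_tsupport _)
    (tsupport_comp_subset_preimage f hφ.continuous)

theorem Fin.sum_ite_lt_eq_of_le {N : ℕ} {n : ℤ} (h0 : 0 ≤ n) (hN : n ≤ N) :
    ∑ k : Fin N, (if (k : ℤ) < n then 1 else 0 : ℤ) = n := by
  lift n to ℕ using h0
  simp only [Nat.cast_lt, Finset.sum_boole, Fin.card_filter_val_lt]
  omega

theorem exists_sum_indicator_of_mem_CcPosV {X : Type*} [TopologicalSpace X] {h : X → ℤ}
    (hh : h ∈ CcPosV X) :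
    ∃ (N : ℕ) (U : Fin N → Set X), (∀ k, IsCompact (U k) ∧ IsOpen (U k)) ∧
      h = ∑ k, (U k).indicator 1 := by
  obtain ⟨hcont, hcpt, hnonneg⟩ := hh
  obtain ⟨N, hN⟩ := (hcpt.isCompact_range hcont).bddAbove
  -- Layer-cake decomposition: `h = ∑_{k < N} 1_{h > k}`.
  refine ⟨N.toNat, fun k => {x | (k : ℤ) < h x}, fun k => ?_, ?_⟩
  · have hclopen : IsClopen {x | (k : ℤ) < h x} :=
      (isClopen_discrete {n : ℤ | (k : ℤ) < n}).preimage hcont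
    refine ⟨hcpt.of_isClosed_subset hclopen.isClosed fun x (hx : (k : ℤ) < h x) =>
      subset_closure ((Int.natCast_nonneg k).trans_lt hx).ne', hclopen.isOpen⟩
  · ext x
    simp only [Finset.sum_apply, indicator_apply, mem_ofPred_eq, Pi.one_apply]
    exact (Fin.sum_ite_lt_eq_of_le (hnonneg x) ((hN ⟨x, rfl⟩).trans (Int.self_le_toNat N))).symm

namespace TopGraph

variable {V E : Type*} [TopologicalSpace V] [TopologicalSpace E] {gr : TopGraph V E}

theorem finite_fiber_inter_support [T1Space V] (hr : IsProperMap gr.r) {f : V → ℤ}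
    (hf : HasCompactSupport f) (v : V) :
    ({e | gr.s e = v} ∩ Function.support (f ∘ gr.r)).Finite :=
  (gr.isLocalHomeomorph_s.isLocallyInjective.finite_preimage_singleton_inter
    gr.isLocalHomeomorph_s.continuous (hf.comp_isProperMap hr) v).subset
    (inter_subset_inter_right _ subset_closure)

theorem theta1_add [T1Space V] (hr : IsProperMap gr.r) {f g : V → ℤ} (hf : HasCompactSupport f)
    (hg : HasCompactSupport g) : gr.theta1 (f + g) = gr.theta1 f + gr.theta1 g :=
  funext fun v => finsum_mem_add_distrib' (finite_fiber_inter_support hr hf v)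
    (finite_fiber_inter_support hr hg v)

theorem theta1_zero : gr.theta1 0 = 0 :=
  funext fun _ => finsum_mem_zero _

theorem hasCompactSupport_theta1 [T2Space V] (hr : IsProperMap gr.r) {f : V → ℤ}
    (hf : HasCompactSupport f) : HasCompactSupport (gr.theta1 f) := by
  refine .of_support_subset_isCompact ((hf.comp_isProperMap hr).image
    gr.isLocalHomeomorph_s.continuous) fun v hv => ?_
  obtain ⟨e, rfl, he⟩ := exists_ne_zero_of_finsum_mem_ne_zero hv
  exact mem_image_of_mem _ (subset_closure he)

theorem theta1_nonneg {f : V → ℤ} (hf : ∀ v, 0 ≤ f v) (v : V) : 0 ≤ gr.theta1 f v :=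
  finsum_nonneg fun _ => finsum_nonneg fun _ => hf _

theorem continuous_theta1 [T2Space V] [T2Space E] (hr : IsProperMap gr.r) {f : V → ℤ}
    (hfc : Continuous f) (hf : HasCompactSupport f) : Continuous (gr.theta1 f) :=
  (gr.isLocalHomeomorph_s.isLocallyConstant_finsum_preimage_singleton
    (((IsLocallyConstant.iff_continuous f).2 hfc).comp_continuous gr.continuous_r)
    (hf.comp_isProperMap hr)).continuous

theorem theta1_mem_CcPosV [T2Space V] [T2Space E] (hr : IsProperMap gr.r) {f : V → ℤ}
    (hf : f ∈ CcPosV V) : gr.theta1 f ∈ CcPosV V :=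
  ⟨continuous_theta1 hr hf.1 hf.2.1, hasCompactSupport_theta1 hr hf.2.1, theta1_nonneg hf.2.2⟩

theorem theta_succ (n : ℕ) (f : V → ℤ) : gr.theta (n + 1) f = gr.theta1 (gr.theta n f) :=
  Function.iterate_succ_apply' _ n f

theorem theta_theta (m n : ℕ) (f : V → ℤ) : gr.theta m (gr.theta n f) = gr.theta (m + n) f :=
  (Function.iterate_add_apply _ m n f).symm

theorem theta_mem_CcPosV [T2Space V] [T2Space E] (hr : IsProperMap gr.r) (n : ℕ) {f : V → ℤ}
    (hf : f ∈ CcPosV V) : gr.theta n f ∈ CcPosV V := by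
  induction n with
  | zero => exact hf
  | succ n ih => rw [theta_succ]; exact theta1_mem_CcPosV hr ih

theorem hasCompactSupport_theta [T2Space V] (hr : IsProperMap gr.r) (n : ℕ) {f : V → ℤ}
    (hf : HasCompactSupport f) : HasCompactSupport (gr.theta n f) := by
  induction n with
  | zero => exact hf
  | succ n ih => rw [theta_succ]; exact hasCompactSupport_theta1 hr ih

theorem theta_zero (n : ℕ) : gr.theta n (0 : V → ℤ) = 0 :=
  Function.iterate_fixed theta1_zero n

theorem theta_add [T2Space V] (hr : IsProperMap gr.r) (n : ℕ) {f g : V → ℤ}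
    (hf : HasCompactSupport f) (hg : HasCompactSupport g) :
    gr.theta n (f + g) = gr.theta n f + gr.theta n g := by
  induction n with
  | zero => rfl
  | succ n ih =>
    rw [theta_succ, theta_succ, theta_succ, ih,
      theta1_add hr (hasCompactSupport_theta hr n hf) (hasCompactSupport_theta hr n hg)]

theorem theta_sum [T2Space V] (hr : IsProperMap gr.r) (n : ℕ) {ι : Type*} (s : Finset ι)
    {F : ι → V → ℤ} (hF : ∀ i ∈ s, HasCompactSupport (F i)) :
    gr.theta n (∑ i ∈ s, F i) = ∑ i ∈ s, gr.theta n (F i) := by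
  classical
  induction s using Finset.induction_on with
  | empty => exact theta_zero n
  | insert i s hi ih =>
    rw [Finset.forall_mem_insert] at hF
    rw [Finset.sum_insert hi, Finset.sum_insert hi, theta_add hr n hF.1
      (Finset.sum_induction _ HasCompactSupport (fun _ _ => .add) .zero hF.2), ih hF.2]

theorem Approx.exists_sum_theta_eq [T2Space V] [T2Space E] (hr : IsProperMap gr.r)
    {f g : V → ℤ} (h : gr.Approx f g) :
    ∃ (m : ℕ) (H : Fin m → V → ℤ) (p q : ℕ) (qs : Fin m → ℕ), (∀ i, H i ∈ CcPosV V) ∧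
      gr.theta p f = ∑ i, gr.theta (qs i) (H i) ∧ gr.theta q g = ∑ i, H i := by
  obtain ⟨L, hL, ⟨a, b, hab⟩, ⟨c, d, hcd⟩, hsim⟩ := h
  rw [← Fin.sum_univ_fun_getElem] at hab hcd
  have hLi (i : Fin L.length) := hL L[(i : ℕ)] (List.getElem_mem _)
  choose P Q hPQ using fun i : Fin L.length => hsim L[(i : ℕ)] (List.getElem_mem _)
  set N := ∑ i, P i
  -- Raise every `fᵢ` to the common exponent `N ≥ Pᵢ`, where `Θ^{Pᵢ} fᵢ = Θ^{Qᵢ} gᵢ` applies.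
  refine ⟨L.length, fun i => gr.theta d L[(i : ℕ)].2, N + d + a, c, fun i => N - P i + Q i + b,
    fun i => theta_mem_CcPosV hr d (hLi i).2, ?_, ?_⟩
  · rw [← theta_theta, hab, theta_theta, theta_sum hr _ _ fun i _ => (hLi i).1.2.1]
    refine Finset.sum_congr rfl fun i _ => ?_
    have hPi : P i ≤ N := Finset.single_le_sum (fun j _ => Nat.zero_le (P j)) (Finset.mem_univ i)
    calc gr.theta (N + d + b) L[(i : ℕ)].1
        _ = gr.theta (N - P i + d + b) (gr.theta (P i) L[(i : ℕ)].1) := by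
          rw [theta_theta, show N - P i + d + b + P i = N + d + b by omega]
        _ = gr.theta (N - P i + Q i + b) (gr.theta d L[(i : ℕ)].2) := by
          rw [hPQ, theta_theta, theta_theta,
            show N - P i + d + b + Q i = N - P i + Q i + b + d by omega]
  · rw [hcd, theta_sum hr _ _ fun i _ => (hLi i).2.2.1]

end TopGraph

theorem approx_normal_form_general {V E : Type*}
    [TopologicalSpace V] [T2Space V]
    [TopologicalSpace E] [T2Space E]
    (gr : TopGraph V E) (hproper : IsProperMap gr.r)
    (f g : V → ℤ) (h : gr.Approx f g) :
    ∃ (n : ℕ) (U : Fin n → Set V) (p q : ℕ) (qs : Fin n → ℕ),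
      (∀ i, IsCompact (U i) ∧ IsOpen (U i)) ∧
      gr.theta p f = ∑ i, gr.theta (qs i) (Set.indicator (U i) 1) ∧
      gr.theta q g = ∑ i, Set.indicator (U i) (1 : V → ℤ) := by
  obtain ⟨m, H, p, q, qs, hH, hp, hq⟩ := h.exists_sum_theta_eq hproper
  choose N U hU hHU using fun i => exists_sum_indicator_of_mem_CcPosV (hH i)
  let e := (finSigmaFinEquiv (n := N)).symm
  have hsum (F : ∀ i, Fin (N i) → V → ℤ) :
      ∑ j, F (e j).1 (e j).2 = ∑ i, ∑ k, F i k := by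
    rw [e.sum_comp (fun x => F x.1 x.2), Fintype.sum_sigma]
  refine ⟨∑ i, N i, fun j => U (e j).1 (e j).2, p, q, fun j => qs (e j).1, fun j => hU _ _,
    ?_, ?_⟩
  · rw [hsum fun i k => gr.theta (qs i) ((U i k).indicator 1), hp]
    refine Finset.sum_congr rfl fun i _ => ?_
    rw [hHU i, TopGraph.theta_sum hproper _ _ fun k _ =>
      .of_support_subset_isCompact (hU i k).1 support_indicator_subset]
  · rw [hsum fun i k => (U i k).indicator 1, hq]
    exact Finset.sum_congr rfl fun i _ => hHU i

/-- **Statement 18.** Let `E` be a topological graph with `E⁰` totally disconnected and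
with `r` proper and surjective.  If `f ≈ g` in `C_c(E⁰, ℤ)⁺`, then there are finitely
many compact open sets `U₁, …, Uₙ ⊆ E⁰` and naturals `p, q, q₁, …, qₙ` with
`Θᵖ(f) = Σᵢ Θ^{qᵢ}(1_{Uᵢ})` and `Θ^q(g) = Σᵢ 1_{Uᵢ}`. -/
theorem approx_normal_form {V E : Type*}
    [TopologicalSpace V] [LocallyCompactSpace V] [T2Space V] [SecondCountableTopology V]
    [TotallyDisconnectedSpace V]
    [TopologicalSpace E] [LocallyCompactSpace E] [T2Space E] [SecondCountableTopology E]
    (gr : TopGraph V E) (hproper : IsProperMap gr.r) (hsurj : Function.Surjective gr.r)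
    (f g : V → ℤ) (hf : f ∈ CcPosV V) (hg : g ∈ CcPosV V) (h : gr.Approx f g) :
    ∃ (n : ℕ) (U : Fin n → Set V) (p q : ℕ) (qs : Fin n → ℕ),
      (∀ i, IsCompact (U i) ∧ IsOpen (U i)) ∧
      gr.theta p f = ∑ i, gr.theta (qs i) (Set.indicator (U i) 1) ∧
      gr.theta q g = ∑ i, Set.indicator (U i) (1 : V → ℤ) :=
  approx_normal_form_general gr hproper f g h
end
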